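/- arXiv:2410.06921 — 3 statements merged into one kernel-verified Lean document; each statement's English description precedes it below -/
import Mathlib

section
/- Assume the off-manifold Hessian block satisfies ∇²_{θ⊥} f ⪯ c_u·σ⊥²·I_g, fix a step size 0 < ᾱ ≤ 1/(c_u·σ∥²) (so ᾱ·c_u·σ⊥²/2 < 1), and suppose at iterate θ^{(t)} that the off-manifold gradient step θ⊥^{(t+1)} = θ⊥^{(t)} − ᾱ·∇⊥f(θ^{(t)}) satisfies f(θ∥^{(t)}, θ*⊥) ≤ f(θ∥^{(t)}, θ⊥^{(t+1)}). Then the off-manifold gradient norm is bounded by the coordinate-wise loss gap: ‖∇⊥f(θ^{(t)})‖² ≤ (f(θ^{(t)}) − f(θ∥^{(t)}, θ*⊥))·ᾱ^{−1}·(1 − ᾱ·c_u·σ⊥²/2)^{−1}. -/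
open Real

noncomputable section

/-- Gradient of `f` in the off-manifold block (last `g` coordinates). -/
noncomputable def gradOff {d g : ℕ}
    (f : EuclideanSpace ℝ (Fin d) × EuclideanSpace ℝ (Fin g) → ℝ)
    (θ : EuclideanSpace ℝ (Fin d) × EuclideanSpace ℝ (Fin g)) : EuclideanSpace ℝ (Fin g) :=
  gradient (fun u => f (θ.1, u)) θ.2

/-! Along the segment `t ↦ θ⊥ − t ᾱ ∇⊥f(θ)` the second derivative of `f` is at most
`c_u σ⊥² ‖ᾱ ∇⊥f(θ)‖²`, so comparing twice with quadratics (the descent lemma) gives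
`f(θ∥, θ⊥ − ᾱ ∇⊥f) ≤ f(θ) − ᾱ (1 − ᾱ c_u σ⊥²/2) ‖∇⊥f‖²`. The left side dominates
`f(θ∥, θ*⊥)` by hypothesis, and `1 − ᾱ c_u σ⊥²/2 > 0` because `ᾱ c_u σ⊥² < ᾱ c_u σ∥² ≤ 1`. -/

theorem le_add_deriv_add_of_deriv_deriv_le {h h' h'' : ℝ → ℝ} {M : ℝ}
    (hh : ∀ t, HasDerivAt h (h' t) t) (hh' : ∀ t, HasDerivAt h' (h'' t) t)
    (hM : ∀ t ∈ Set.Icc (0 : ℝ) 1, h'' t ≤ M) :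
    h 1 ≤ h 0 + h' 0 + M / 2 := by
  have hslope : ∀ t ∈ Set.Icc (0 : ℝ) 1, h' t ≤ h' 0 + M * t :=
    image_le_of_deriv_right_le_deriv_boundary (B' := fun _ => M)
      (fun t _ => (hh' t).continuousAt.continuousWithinAt) (fun t _ => (hh' t).hasDerivWithinAt)
      (by simp) (by fun_prop)
      (fun t _ => (((hasDerivAt_id t).const_mul M).const_add (h' 0)).hasDerivWithinAt.congr_deriv
        (mul_one M))
      (fun t ht => hM t (Set.Ico_subset_Icc_self ht))
  have hvalue := image_le_of_deriv_right_le_deriv_boundary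
      (B := fun t => h 0 + h' 0 * t + M / 2 * t ^ 2) (B' := fun t => h' 0 + M * t)
      (fun t _ => (hh t).continuousAt.continuousWithinAt) (fun t _ => (hh t).hasDerivWithinAt)
      (by simp) (by fun_prop)
      (fun t _ => ((((hasDerivAt_id t).const_mul (h' 0)).const_add (h 0)).add
        ((hasDerivAt_pow 2 t).const_mul (M / 2))).hasDerivWithinAt.congr_deriv (by ring))
      (fun t ht => hslope t (Set.Ico_subset_Icc_self ht)) (Set.right_mem_Icc.2 zero_le_one)
  simpa using hvalue

theorem ContDiff.le_add_fderiv_add_of_fderiv_fderiv_le {E : Type*} [NormedAddCommGroup E]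
    [NormedSpace ℝ E] {φ : E → ℝ} (hφ : ContDiff ℝ 2 φ) (x v : E) {M : ℝ}
    (hM : ∀ t ∈ Set.Icc (0 : ℝ) 1, fderiv ℝ (fderiv ℝ φ) (x + t • v) v v ≤ M) :
    φ (x + v) ≤ φ x + fderiv ℝ φ x v + M / 2 := by
  have hφ' : Differentiable ℝ φ := hφ.differentiable (by norm_num)
  have hφ'' : Differentiable ℝ (fderiv ℝ φ) :=
    (hφ.fderiv_right (m := 1) (by norm_num)).differentiable one_ne_zero
  have hline : ∀ t : ℝ, HasDerivAt (fun t : ℝ => x + t • v) v t := fun t =>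
    ((hasDerivAt_id t).smul_const v).const_add x |>.congr_deriv (one_smul ℝ v)
  have h := le_add_deriv_add_of_deriv_deriv_le (h := fun t => φ (x + t • v))
    (fun t => (hφ' _).hasFDerivAt.comp_hasDerivAt t (hline t))
    (fun t => by
      simpa using ((hφ'' _).hasFDerivAt.comp_hasDerivAt t (hline t)).clm_apply
        (hasDerivAt_const t v))
    hM
  simpa using h

theorem ContDiff.apply_sub_smul_gradient_le {F : Type*} [NormedAddCommGroup F]
    [InnerProductSpace ℝ F] [CompleteSpace F] {φ : F → ℝ} (hφ : ContDiff ℝ 2 φ) {L : ℝ}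
    (hL : ∀ y v, fderiv ℝ (fderiv ℝ φ) y v v ≤ L * ‖v‖ ^ 2) (x : F) (α : ℝ) :
    φ (x - α • gradient φ x) ≤ φ x - α * (1 - α * L / 2) * ‖gradient φ x‖ ^ 2 := by
  have h := hφ.le_add_fderiv_add_of_fderiv_fderiv_le x (-(α • gradient φ x))
    (fun t _ => hL _ _)
  rw [← inner_gradient_left, inner_neg_right, real_inner_smul_right, real_inner_self_eq_norm_sq,
    norm_neg, norm_smul, mul_pow, Real.norm_eq_abs, sq_abs, ← sub_eq_add_neg] at h
  linarith

theorem off_gradient_norm_bound_general (d g : ℕ) (cu σon σoff : ℝ)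
    (hcu : 0 < cu) (hσoff : 0 < σoff) (hσ : σoff < σon)
    (f : EuclideanSpace ℝ (Fin d) × EuclideanSpace ℝ (Fin g) → ℝ)
    (hf : ContDiff ℝ 2 f)
    (hupperOff : ∀ (θ : EuclideanSpace ℝ (Fin d) × EuclideanSpace ℝ (Fin g))
      (v : EuclideanSpace ℝ (Fin g)),
      fderiv ℝ (fderiv ℝ (fun u => f (θ.1, u))) θ.2 v v ≤ cu * σoff ^ 2 * ‖v‖ ^ 2)
    (θstar : EuclideanSpace ℝ (Fin d) × EuclideanSpace ℝ (Fin g))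
    (ᾱ : ℝ) (hᾱ : 0 < ᾱ) (hᾱ' : ᾱ ≤ 1 / (cu * σon ^ 2))
    (θt : EuclideanSpace ℝ (Fin d) × EuclideanSpace ℝ (Fin g))
    (hcoord : f (θt.1, θstar.2) ≤ f (θt.1, θt.2 - ᾱ • gradOff f θt)) :
    ᾱ * cu * σoff ^ 2 / 2 < 1 ∧
    ‖gradOff f θt‖ ^ 2 ≤
      (f θt - f (θt.1, θstar.2)) * ᾱ⁻¹ * (1 - ᾱ * cu * σoff ^ 2 / 2)⁻¹ := by
  have hstep_lt_one : ᾱ * cu * σoff ^ 2 < 1 := by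
    have hσ2 : σoff ^ 2 < σon ^ 2 := by gcongr
    rw [le_div_iff₀ (by have := hσoff.trans hσ; positivity)] at hᾱ'
    nlinarith [mul_pos hᾱ hcu]
  refine ⟨by linarith, ?_⟩
  have hdescent := (hf.comp (contDiff_const.prodMk contDiff_id)).apply_sub_smul_gradient_le
    (fun y v => hupperOff (θt.1, y) v) θt.2 ᾱ
  change f (θt.1, θt.2 - ᾱ • gradOff f θt)
    ≤ f θt - ᾱ * (1 - ᾱ * (cu * σoff ^ 2) / 2) * ‖gradOff f θt‖ ^ 2 at hdescent
  rw [mul_assoc, ← mul_inv, le_mul_inv_iff₀ (by nlinarith)]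
  linarith

/-- **Off-manifold gradient-norm bound by the coordinate-wise loss gap.**
Assume the off-manifold Hessian block satisfies `∇²_{θ⊥}f ⪯ c_u σ⊥² I_g`, fix
`0 < ᾱ ≤ 1/(c_u σ∥²)` (so `ᾱ c_u σ⊥²/2 < 1`), and suppose the off-manifold
gradient step `θ⊥^{t+1} = θ⊥^t − ᾱ ∇⊥f(θ^t)` satisfies
`f(θ∥^t, θ*⊥) ≤ f(θ∥^t, θ⊥^{t+1})`.  Then
`‖∇⊥f(θ^t)‖² ≤ (f(θ^t) − f(θ∥^t, θ*⊥)) · ᾱ⁻¹ · (1 − ᾱ c_u σ⊥²/2)⁻¹`. -/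
theorem off_gradient_norm_bound (d g : ℕ) (cu σon σoff : ℝ)
    (hcu : 0 < cu) (hσoff : 0 < σoff) (hσ : σoff < σon)
    (f : EuclideanSpace ℝ (Fin d) × EuclideanSpace ℝ (Fin g) → ℝ)
    (hf : ContDiff ℝ 2 f)
    (hupperOff : ∀ (θ : EuclideanSpace ℝ (Fin d) × EuclideanSpace ℝ (Fin g))
      (v : EuclideanSpace ℝ (Fin g)),
      fderiv ℝ (fderiv ℝ (fun u => f (θ.1, u))) θ.2 v v ≤ cu * σoff ^ 2 * ‖v‖ ^ 2)
    (θstar : EuclideanSpace ℝ (Fin d) × EuclideanSpace ℝ (Fin g))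
    (hmin : ∀ θ, f θstar ≤ f θ)
    (ᾱ : ℝ) (hᾱ : 0 < ᾱ) (hᾱ' : ᾱ ≤ 1 / (cu * σon ^ 2))
    (θt : EuclideanSpace ℝ (Fin d) × EuclideanSpace ℝ (Fin g))
    (hcoord : f (θt.1, θstar.2) ≤ f (θt.1, θt.2 - ᾱ • gradOff f θt)) :
    ᾱ * cu * σoff ^ 2 / 2 < 1 ∧
    ‖gradOff f θt‖ ^ 2 ≤
      (f θt - f (θt.1, θstar.2)) * ᾱ⁻¹ * (1 - ᾱ * cu * σoff ^ 2 / 2)⁻¹ :=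
  off_gradient_norm_bound_general d g cu σon σoff hcu hσoff hσ f hf hupperOff θstar ᾱ hᾱ hᾱ' θt
    hcoord
end
end

section
/- Under the data model with balanced classes π = 1/2, any linear classifier that ignores the off-manifold coordinates incurs a loss of at least ν·ln 2: for every θ = (θ∥, θ⊥) with θ⊥ = 0, the population logistic loss satisfies L(θ) ≥ ν·ln 2, where ν is the overlapping coefficient of the two class-conditional on-manifold densities. In particular, inf over θ∥ of L((θ∥, 0)) ≥ ν·ln 2. -/
/-! `ℓ(z) + ℓ(−z) = log (2 + eᶻ + e⁻ᶻ) ≥ 2 log 2`. When `θ⊥ = 0` the score depends on `x∥` only,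
so a point `u` of the overlap `I∥⁽⁻¹⁾ ∩ I∥⁽⁺¹⁾` contributes, with weight `1/(2lᵈ)` under each label,
`ℓ(θ∥ᵀu) + ℓ(−θ∥ᵀu) ≥ 2 log 2` to the loss. Discarding the nonnegative loss outside the overlap
leaves `vol(I∥⁽⁻¹⁾ ∩ I∥⁽⁺¹⁾)/lᵈ · log 2 = ν log 2`. -/

open MeasureTheory Real

noncomputable section

/-- On-manifold hypercube for class `+1`: `[−k·1_d, (l−k)·1_d]`. -/
def onCubePos (d : ℕ) (l k : ℝ) : Set (Fin d → ℝ) :=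
  Set.Icc (fun _ => -k) (fun _ => l - k)

/-- On-manifold hypercube for class `−1`: `[−(l−k)·1_d, k·1_d]`. -/
def onCubeNeg (d : ℕ) (l k : ℝ) : Set (Fin d → ℝ) :=
  Set.Icc (fun _ => -(l - k)) (fun _ => k)

/-- Off-manifold hypercube `[μ − √3σ·1_g, μ + √3σ·1_g]`. -/
def offCube (g : ℕ) (μ : Fin g → ℝ) (σ : ℝ) : Set (Fin g → ℝ) :=
  Set.Icc (fun j => μ j - Real.sqrt 3 * σ) (fun j => μ j + Real.sqrt 3 * σ)

/-- The uniform probability measure on a set `S ⊆ ℝⁿ`. -/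
noncomputable def unif {n : ℕ} (S : Set (Fin n → ℝ)) : Measure (Fin n → ℝ) :=
  (volume S)⁻¹ • volume.restrict S

/-- The joint distribution of `((x∥, x⊥), y)`: with probability `pr` the label is
`y = +1` and `x∥ ~ U(I∥⁽⁺¹⁾)`, `x⊥ ~ U(I⊥⁽⁺¹⁾)` independently; with probability
`1 − pr` the label is `y = −1` and `x∥ ~ U(I∥⁽⁻¹⁾)`, `x⊥ ~ U(I⊥⁽⁻¹⁾)`. -/
noncomputable def dataMeasure (d g : ℕ) (pr l k σoff : ℝ) (μp μm : Fin g → ℝ) :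
    Measure (((Fin d → ℝ) × (Fin g → ℝ)) × ℝ) :=
  ENNReal.ofReal pr •
    (((unif (onCubePos d l k)).prod (unif (offCube g μp σoff))).map fun x => (x, (1 : ℝ)))
  + ENNReal.ofReal (1 - pr) •
    (((unif (onCubeNeg d l k)).prod (unif (offCube g μm σoff))).map fun x => (x, (-1 : ℝ)))

/-- The logistic loss `ℓ(z) = ln(1 + e^{−z})`. -/
noncomputable def logloss (z : ℝ) : ℝ := Real.log (1 + Real.exp (-z))

/-- The sigmoid function `σ(v) = (1 + e^{−v})⁻¹`. -/
noncomputable def sigmoid (v : ℝ) : ℝ := (1 + Real.exp (-v))⁻¹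

/-- Linear score `θᵀx = θ∥ᵀx∥ + θ⊥ᵀx⊥`. -/
def score {d g : ℕ} (θ x : (Fin d → ℝ) × (Fin g → ℝ)) : ℝ :=
  ∑ i, θ.1 i * x.1 i + ∑ j, θ.2 j * x.2 j

/-- The population logistic loss `L(θ) = E[ℓ(y·θᵀx)]`. -/
noncomputable def popLoss {d g : ℕ} (μ : Measure (((Fin d → ℝ) × (Fin g → ℝ)) × ℝ))
    (θ : (Fin d → ℝ) × (Fin g → ℝ)) : ℝ :=
  ∫ p, logloss (p.2 * score θ p.1) ∂μ

/-- The overlapping coefficient `ν = ∫ min(f∥⁽⁻¹⁾(u), f∥⁽⁺¹⁾(u)) du` of the two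
class-conditional on-manifold uniform densities (each density being
`1/l^d` on its hypercube of side `l`). -/
noncomputable def ovl (d : ℕ) (l k : ℝ) : ℝ :=
  ∫ u : Fin d → ℝ, min ((onCubeNeg d l k).indicator (fun _ => 1 / l ^ d) u)
    ((onCubePos d l k).indicator (fun _ => 1 / l ^ d) u)

lemma logloss_nonneg (z : ℝ) : 0 ≤ logloss z :=
  Real.log_nonneg (by linarith [Real.exp_pos (-z)])

@[fun_prop]
lemma continuous_logloss : Continuous logloss :=
  (continuous_const.add (Real.continuous_exp.comp continuous_neg)).log
    fun z => (by positivity : (0 : ℝ) < 1 + Real.exp (-z)).ne'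

lemma two_mul_log_two_le_logloss_add_logloss_neg (z : ℝ) :
    2 * Real.log 2 ≤ logloss z + logloss (-z) := by
  have hprod : logloss z + logloss (-z) = Real.log ((1 + Real.exp (-z)) * (1 + Real.exp z)) := by
    rw [logloss, logloss, neg_neg, Real.log_mul (by positivity) (by positivity)]
  have hfour : (4 : ℝ) ≤ (1 + Real.exp (-z)) * (1 + Real.exp z) := by
    have h1 : Real.exp (-z) * Real.exp z = 1 := by
      rw [← Real.exp_add, neg_add_cancel, Real.exp_zero]
    nlinarith [sq_nonneg (Real.exp z - 1), Real.exp_pos z]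
  calc 2 * Real.log 2 = Real.log 4 := by
        rw [show (4 : ℝ) = 2 ^ 2 by norm_num, Real.log_pow, Nat.cast_ofNat]
    _ ≤ _ := hprod ▸ Real.log_le_log (by norm_num) hfour

lemma two_mul_log_two_mul_measureReal_inter_le {α : Type*} [MeasurableSpace α] {μ : Measure α}
    {S T : Set α} {s : α → ℝ} (hST : MeasurableSet (S ∩ T)) (hμST : μ (S ∩ T) ≠ ⊤)
    (hS : IntegrableOn (fun x => logloss (s x)) S μ)
    (hT : IntegrableOn (fun x => logloss (-s x)) T μ) :
    2 * Real.log 2 * μ.real (S ∩ T) ≤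
      ∫ x in S, logloss (s x) ∂μ + ∫ x in T, logloss (-s x) ∂μ := by
  have hS' := hS.mono_set (Set.inter_subset_left (t := T))
  have hT' := hT.mono_set (Set.inter_subset_right (s := S))
  calc 2 * Real.log 2 * μ.real (S ∩ T)
      ≤ ∫ x in S ∩ T, (logloss (s x) + logloss (-s x)) ∂μ :=
        setIntegral_ge_of_const_le_real hST hμST
          (fun x _ => two_mul_log_two_le_logloss_add_logloss_neg (s x)) (hS'.add hT')
    _ = ∫ x in S ∩ T, logloss (s x) ∂μ + ∫ x in S ∩ T, logloss (-s x) ∂μ := integral_add hS' hT'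
    _ ≤ _ := add_le_add
        (setIntegral_mono_set hS (.of_forall fun _ => logloss_nonneg _)
          Set.inter_subset_left.eventuallyLE)
        (setIntegral_mono_set hT (.of_forall fun _ => logloss_nonneg _)
          Set.inter_subset_right.eventuallyLE)

section Uniform

variable {n : ℕ} {S : Set (Fin n → ℝ)}

instance : SFinite (unif S) := by
  unfold unif
  infer_instance

lemma integral_unif (f : (Fin n → ℝ) → ℝ) :
    ∫ x, f x ∂unif S = (volume.real S)⁻¹ * ∫ x in S, f x := by
  rw [unif, integral_smul_measure, smul_eq_mul, ENNReal.toReal_inv, measureReal_def]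

lemma isProbabilityMeasure_unif (h0 : volume S ≠ 0) (htop : volume S ≠ ⊤) :
    IsProbabilityMeasure (unif S) :=
  ⟨by rw [unif, Measure.smul_apply, Measure.restrict_apply_univ, smul_eq_mul,
    ENNReal.inv_mul_cancel h0 htop]⟩

lemma integrable_unif_of_continuous {f : (Fin n → ℝ) → ℝ} (hS : IsCompact S)
    (h0 : volume S ≠ 0) (hf : Continuous f) : Integrable f (unif S) :=
  (hf.continuousOn.integrableOn_compact hS).smul_measure (ENNReal.inv_ne_top.mpr h0)

end Uniform

section Cubes

variable {d : ℕ} {l k : ℝ}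

lemma isCompact_onCubePos : IsCompact (onCubePos d l k) := isCompact_Icc

lemma isCompact_onCubeNeg : IsCompact (onCubeNeg d l k) := isCompact_Icc

lemma measurableSet_onCubePos : MeasurableSet (onCubePos d l k) := measurableSet_Icc

lemma measurableSet_onCubeNeg : MeasurableSet (onCubeNeg d l k) := measurableSet_Icc

lemma volume_onCubePos : volume (onCubePos d l k) = ENNReal.ofReal l ^ d := by
  simp [onCubePos, Real.volume_Icc_pi]

lemma volume_onCubeNeg : volume (onCubeNeg d l k) = ENNReal.ofReal l ^ d := by
  simp [onCubeNeg, Real.volume_Icc_pi]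

lemma measureReal_onCubePos (hl : 0 ≤ l) : volume.real (onCubePos d l k) = l ^ d := by
  simp [measureReal_def, volume_onCubePos, hl]

lemma measureReal_onCubeNeg (hl : 0 ≤ l) : volume.real (onCubeNeg d l k) = l ^ d := by
  simp [measureReal_def, volume_onCubeNeg, hl]

lemma isProbabilityMeasure_unif_offCube {g : ℕ} {μ : Fin g → ℝ} {σ : ℝ} (hσ : 0 < σ) :
    IsProbabilityMeasure (unif (offCube g μ σ)) := by
  refine isProbabilityMeasure_unif ?_ isCompact_Icc.measure_lt_top.ne
  simp only [offCube, Real.volume_Icc_pi, ne_eq, Finset.prod_eq_zero_iff, Finset.mem_univ,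
    true_and, ENNReal.ofReal_eq_zero, not_exists, not_le]
  intro _
  linarith [show 0 < Real.sqrt 3 * σ by positivity]

lemma ovl_eq (hl : 0 < l) :
    ovl d l k = volume.real (onCubePos d l k ∩ onCubeNeg d l k) / l ^ d := by
  have hmin : ∀ u, min ((onCubeNeg d l k).indicator (fun _ => 1 / l ^ d) u)
      ((onCubePos d l k).indicator (fun _ => 1 / l ^ d) u) =
      (onCubePos d l k ∩ onCubeNeg d l k).indicator (fun _ => 1 / l ^ d) u := by
    intro u
    by_cases hN : u ∈ onCubeNeg d l k <;> by_cases hP : u ∈ onCubePos d l k <;>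
      simp [hN, hP, hl.le]
  simp_rw [ovl, hmin]
  rw [integral_indicator_const _ (measurableSet_onCubePos.inter measurableSet_onCubeNeg),
    smul_eq_mul, mul_one_div]

lemma two_mul_log_two_mul_ovl_le (hl : 0 < l) {s : (Fin d → ℝ) → ℝ} (hs : Continuous s) :
    2 * Real.log 2 * ovl d l k ≤
      ∫ u, logloss (s u) ∂unif (onCubePos d l k) + ∫ u, logloss (-s u) ∂unif (onCubeNeg d l k) := by
  have hoverlap := two_mul_log_two_mul_measureReal_inter_le (μ := volume)
    (S := onCubePos d l k) (T := onCubeNeg d l k)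
    (measurableSet_onCubePos.inter measurableSet_onCubeNeg)
    (isCompact_onCubePos.inter isCompact_onCubeNeg).measure_lt_top.ne
    ((continuous_logloss.comp hs).continuousOn.integrableOn_compact isCompact_onCubePos)
    ((continuous_logloss.comp hs.neg).continuousOn.integrableOn_compact isCompact_onCubeNeg)
  rw [integral_unif, integral_unif, measureReal_onCubePos hl.le, measureReal_onCubeNeg hl.le,
    ovl_eq hl, ← mul_add]
  calc 2 * Real.log 2 * (volume.real (onCubePos d l k ∩ onCubeNeg d l k) / l ^ d)
      = (l ^ d)⁻¹ * (2 * Real.log 2 * volume.real (onCubePos d l k ∩ onCubeNeg d l k)) := by ring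
    _ ≤ _ := by gcongr

end Cubes

section DataMeasure

variable {d g : ℕ} {pr l k σoff : ℝ} {μp μm : Fin g → ℝ}

lemma integral_dataMeasure (hpr0 : 0 ≤ pr) (hpr1 : pr ≤ 1)
    {F : ((Fin d → ℝ) × (Fin g → ℝ)) × ℝ → ℝ} (hF : Measurable F)
    (hFp : Integrable (fun x => F (x, 1))
      ((unif (onCubePos d l k)).prod (unif (offCube g μp σoff))))
    (hFm : Integrable (fun x => F (x, -1))
      ((unif (onCubeNeg d l k)).prod (unif (offCube g μm σoff)))) :
    ∫ p, F p ∂dataMeasure d g pr l k σoff μp μm =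
      pr * ∫ x, F (x, 1) ∂(unif (onCubePos d l k)).prod (unif (offCube g μp σoff)) +
        (1 - pr) * ∫ x, F (x, -1) ∂(unif (onCubeNeg d l k)).prod (unif (offCube g μm σoff)) := by
  have hm : ∀ y : ℝ, Measurable fun x : (Fin d → ℝ) × (Fin g → ℝ) => (x, y) :=
    fun y => measurable_id.prodMk measurable_const
  have hsmulMap : ∀ (y c : ℝ) (ν : Measure ((Fin d → ℝ) × (Fin g → ℝ))),
      Integrable (fun x => F (x, y)) ν → Integrable F (ENNReal.ofReal c • ν.map fun x => (x, y)) :=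
    fun y _ _ h => ((integrable_map_measure hF.aestronglyMeasurable (hm y).aemeasurable).mpr
      h).smul_measure ENNReal.ofReal_ne_top
  rw [dataMeasure, integral_add_measure (hsmulMap 1 _ _ hFp) (hsmulMap (-1) _ _ hFm),
    integral_smul_measure, integral_smul_measure,
    integral_map (hm 1).aemeasurable hF.aestronglyMeasurable,
    integral_map (hm (-1)).aemeasurable hF.aestronglyMeasurable,
    ENNReal.toReal_ofReal hpr0, ENNReal.toReal_ofReal (sub_nonneg.mpr hpr1), smul_eq_mul,
    smul_eq_mul]

lemma popLoss_dataMeasure_mk_zero (hpr0 : 0 ≤ pr) (hpr1 : pr ≤ 1) (hl : 0 < l)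
    (hσoff : 0 < σoff) (θon : Fin d → ℝ) :
    popLoss (dataMeasure d g pr l k σoff μp μm) (θon, 0) =
      pr * ∫ u, logloss (∑ i, θon i * u i) ∂unif (onCubePos d l k) +
        (1 - pr) * ∫ u, logloss (-∑ i, θon i * u i) ∂unif (onCubeNeg d l k) := by
  set s : (Fin d → ℝ) → ℝ := fun u => ∑ i, θon i * u i
  have hP0 : volume (onCubePos d l k) ≠ 0 := by simp [volume_onCubePos, hl]
  have hN0 : volume (onCubeNeg d l k) ≠ 0 := by simp [volume_onCubeNeg, hl]
  have := isProbabilityMeasure_unif_offCube (μ := μp) hσoff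
  have := isProbabilityMeasure_unif_offCube (μ := μm) hσoff
  have hscore : ∀ x : (Fin d → ℝ) × (Fin g → ℝ), score (θon, 0) x = s x.1 := by simp [score, s]
  rw [popLoss, integral_dataMeasure (F := fun p => logloss (p.2 * score (θon, 0) p.1)) hpr0 hpr1
    (by unfold score; fun_prop)]
  all_goals simp only [hscore, one_mul, neg_one_mul]
  · rw [integral_fun_fst (fun u => logloss (s u)), integral_fun_fst (fun u => logloss (-s u)),
      probReal_univ, probReal_univ, one_smul, one_smul]
  · exact (integrable_unif_of_continuous (f := fun u => logloss (s u)) isCompact_onCubePos hP0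
      (by fun_prop)).comp_fst _
  · exact (integrable_unif_of_continuous (f := fun u => logloss (-s u)) isCompact_onCubeNeg hN0
      (by fun_prop)).comp_fst _

end DataMeasure

theorem on_manifold_only_loss_lower_bound_general (d g : ℕ) (l k σoff : ℝ)
    (μp μm : Fin g → ℝ)
    (hk : 0 < k) (hkl : k < l / 2)
    (hσoff : 0 < σoff) :
    (∀ θon : Fin d → ℝ,
      ovl d l k * Real.log 2 ≤
        popLoss (dataMeasure d g (1 / 2) l k σoff μp μm) (θon, 0)) ∧
    ovl d l k * Real.log 2 ≤
      ⨅ θon : Fin d → ℝ, popLoss (dataMeasure d g (1 / 2) l k σoff μp μm) (θon, 0) := by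
  have hl : 0 < l := by linarith
  have hbound : ∀ θon : Fin d → ℝ, ovl d l k * Real.log 2 ≤
      popLoss (dataMeasure d g (1 / 2) l k σoff μp μm) (θon, 0) := fun θon => by
    rw [popLoss_dataMeasure_mk_zero (by norm_num) (by norm_num) hl hσoff]
    linarith [two_mul_log_two_mul_ovl_le (k := k) hl
      (show Continuous fun u : Fin d → ℝ => ∑ i, θon i * u i by fun_prop)]
  exact ⟨hbound, le_ciInf hbound⟩

/-- **On-manifold-only classifiers incur loss at least `ν·ln 2`.**
Under the data model with balanced classes (`π = 1/2`), any linear classifier that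
ignores the off-manifold coordinates (`θ⊥ = 0`) has population logistic loss at
least `ν·ln 2`, where `ν` is the overlapping coefficient of the two
class-conditional on-manifold densities; in particular
`inf_{θ∥} L((θ∥, 0)) ≥ ν·ln 2`. -/
theorem on_manifold_only_loss_lower_bound (d g : ℕ) (l k σoff : ℝ)
    (μp μm : Fin g → ℝ)
    (hk : 0 < k) (hkl : k < l / 2)
    (hσoff : 0 < σoff) (hσ : σoff < Real.sqrt (l ^ 2 / 12))
    (hdisj : Disjoint (offCube g μm σoff) (offCube g μp σoff)) :
    (∀ θon : Fin d → ℝ,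
      ovl d l k * Real.log 2 ≤
        popLoss (dataMeasure d g (1 / 2) l k σoff μp μm) (θon, 0)) ∧
    ovl d l k * Real.log 2 ≤
      ⨅ θon : Fin d → ℝ, popLoss (dataMeasure d g (1 / 2) l k σoff μp μm) (θon, 0) :=
  on_manifold_only_loss_lower_bound_general d g l k σoff μp μm hk hkl hσoff
end
end

section
/- Under the data model, assume additionally that the off-manifold means are symmetric, μ⊥^{(−1)} = −μ⊥^{(+1)}, and that the off-manifold supports are disjoint, I⊥^{(−1)} ∩ I⊥^{(+1)} = ∅. Then the data distribution is linearly separable in the ambient space by a classifier supported only on the off-manifold coordinates: there exists θ = (θ∥, θ⊥) with θ∥ = 0 such that y·θᵀx > 0 for almost every (x, y) drawn from the distribution. -/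
open MeasureTheory Real

noncomputable section

/-- **Linear separability through the off-manifold coordinates.**
Under the data model, if the off-manifold means are symmetric
(`μ⊥⁽⁻¹⁾ = −μ⊥⁽⁺¹⁾`) and the off-manifold supports are disjoint, then the data
distribution is linearly separable in the ambient space by a classifier supported
only on the off-manifold coordinates: there exists `θ = (θ∥, θ⊥)` with `θ∥ = 0`
and `y·θᵀx > 0` for almost every `(x, y)` drawn from the distribution. -/
theorem off_manifold_linear_separability (d g : ℕ) (pr l k σoff : ℝ)
    (μp μm : Fin g → ℝ)
    (hpr : 0 < pr) (hpr1 : pr < 1) (hk : 0 < k) (hkl : k < l / 2)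
    (hσoff : 0 < σoff) (hσ : σoff < Real.sqrt (l ^ 2 / 12))
    (hsym : μm = -μp)
    (hdisj : Disjoint (offCube g μm σoff) (offCube g μp σoff)) :
    ∃ θ : (Fin d → ℝ) × (Fin g → ℝ), θ.1 = 0 ∧
      ∀ᵐ p ∂(dataMeasure d g pr l k σoff μp μm), 0 < p.2 * score θ p.1 := by
  have hc : 0 < Real.sqrt 3 * σoff := by positivity
  have hj : ∃ j : Fin g, Real.sqrt 3 * σoff < |μp j| := by
    by_contra h
    push_neg at h
    have h0m : (0 : Fin g → ℝ) ∈ offCube g μm σoff := by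
      simp only [offCube, hsym, Set.mem_Icc, Pi.le_def, Pi.neg_apply, Pi.zero_apply]
      constructor <;> intro i <;> linarith [(abs_le.mp (h i)).1, (abs_le.mp (h i)).2]
    have h0p : (0 : Fin g → ℝ) ∈ offCube g μp σoff := by
      simp only [offCube, Set.mem_Icc, Pi.le_def, Pi.zero_apply]
      constructor <;> intro i <;> linarith [(abs_le.mp (h i)).1, (abs_le.mp (h i)).2]
    exact Set.disjoint_left.mp hdisj h0m h0p
  obtain ⟨j, hj⟩ := hj
  set s : ℝ := if 0 ≤ μp j then 1 else -1 with hs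
  set θ : (Fin d → ℝ) × (Fin g → ℝ) := (0, Pi.single j s) with hθ
  have hscore : ∀ x : (Fin d → ℝ) × (Fin g → ℝ), score θ x = s * x.2 j := by
    intro x
    simp only [score, hθ, Pi.zero_apply, zero_mul, Finset.sum_const_zero, zero_add]
    rw [Finset.sum_eq_single j]
    · simp
    · intro b _ hb; simp [Pi.single_apply, hb]
    · intro hj'; exact absurd (Finset.mem_univ j) hj'
  have claimP : ∀ x ∈ offCube g μp σoff, 0 < s * x j := by
    intro x hx
    have h1 : μp j - Real.sqrt 3 * σoff ≤ x j := hx.1 j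
    have h2 : x j ≤ μp j + Real.sqrt 3 * σoff := hx.2 j
    by_cases hp : 0 ≤ μp j
    · rw [abs_of_nonneg hp] at hj
      simp only [hs, if_pos hp, one_mul]
      linarith
    · rw [abs_of_neg (not_le.mp hp)] at hj
      simp only [hs, if_neg hp, neg_one_mul]
      linarith
  have claimM : ∀ x ∈ offCube g μm σoff, s * x j < 0 := by
    intro x hx
    have h1 : μm j - Real.sqrt 3 * σoff ≤ x j := hx.1 j
    have h2 : x j ≤ μm j + Real.sqrt 3 * σoff := hx.2 j
    have hm : μm j = -μp j := by rw [hsym, Pi.neg_apply]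
    rw [hm] at h1 h2
    by_cases hp : 0 ≤ μp j
    · rw [abs_of_nonneg hp] at hj
      simp only [hs, if_pos hp, one_mul]
      linarith
    · rw [abs_of_neg (not_le.mp hp)] at hj
      simp only [hs, if_neg hp, neg_one_mul]
      linarith
  refine ⟨θ, rfl, ?_⟩
  have hmul : Measurable fun p : ((Fin d → ℝ) × (Fin g → ℝ)) × ℝ => p.2 * score θ p.1 := by
    simp only [hscore]
    exact measurable_snd.mul
      (measurable_const.mul (((measurable_pi_apply j).comp measurable_snd).comp measurable_fst))
  have hmeas : MeasurableSet {p : ((Fin d → ℝ) × (Fin g → ℝ)) × ℝ | 0 < p.2 * score θ p.1} :=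
    measurableSet_lt measurable_const hmul
  have haux : ∀ (m : Measure (Fin d → ℝ)) (B : Set (Fin g → ℝ)), MeasurableSet B →
      ∀ᵐ x ∂(m.prod (unif B)), x.2 ∈ B := by
    intro m B hB
    haveI : SFinite (unif B) := by unfold unif; infer_instance
    rw [ae_iff]
    have hset : {x : (Fin d → ℝ) × (Fin g → ℝ) | ¬ x.2 ∈ B} = Set.univ ×ˢ Bᶜ := by
      ext x; simp
    rw [hset, Measure.prod_prod]
    have hzero : unif B Bᶜ = 0 := by
      simp [unif, Measure.restrict_apply hB.compl, Set.compl_inter_self]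
    rw [hzero, mul_zero]
  have hBp : MeasurableSet (offCube g μp σoff) := measurableSet_Icc
  have hBm : MeasurableSet (offCube g μm σoff) := measurableSet_Icc
  have hf1 : Measurable fun x : (Fin d → ℝ) × (Fin g → ℝ) => (x, (1 : ℝ)) :=
    measurable_id.prodMk measurable_const
  have hf2 : Measurable fun x : (Fin d → ℝ) × (Fin g → ℝ) => (x, (-1 : ℝ)) :=
    measurable_id.prodMk measurable_const
  rw [dataMeasure, ae_add_measure_iff]
  constructor
  · apply Measure.ae_smul_measure
    rw [ae_map_iff hf1.aemeasurable hmeas]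
    filter_upwards [haux _ _ hBp] with x hx
    simp only [Set.mem_setOf_eq, one_mul, hscore]
    exact claimP x.2 hx
  · apply Measure.ae_smul_measure
    rw [ae_map_iff hf2.aemeasurable hmeas]
    filter_upwards [haux _ _ hBm] with x hx
    simp only [Set.mem_setOf_eq, neg_one_mul, hscore]
    have := claimM x.2 hx
    linarith
end
end
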